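/- arXiv:2103.10291 — 3 statements merged into one kernel-verified Lean document; each statement's English description precedes it below -/
import Mathlib

section
/- Let n ≥ 1, let Δ ⊆ ℝⁿ be the standard simplex, let Ω : ℝⁿ → ℝ be continuous on Δ, let Ω*(z) := sup_{p ∈ Δ} (⟨z, p⟩ − Ω(p)), let L_Ω(z; q) := Ω*(z) + Ω(q) − ⟨z, q⟩ for q ∈ Δ, fix ε ∈ [0, 1), a coordinate y*, and the uniform distribution u := (1/n, …, 1/n). Then for every z ∈ ℝⁿ, L_Ω(z; (1−ε)·e_{y*} + ε·u) = (1−ε)·( L_Ω(z; e_{y*}) + (ε/(1−ε))·L_Ω(z; u) ) − I_{Ω,ε}(e_{y*}, u), where I_{Ω,ε}(q, r) := −Ω((1−ε)·q + ε·r) + (1−ε)·Ω(q) + ε·Ω(r). In particular, the smoothed loss equals (1−ε) times L_Ω(z; e_{y*}) + λ·L_Ω(z; u) with λ = ε/(1−ε), up to an additive constant independent of z. -/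
/-- Second identity of Proposition 1 (smoothed Fenchel-Young loss as a
(1-ε)-scaled regularized loss towards the uniform distribution, minus a Bregman
information constant). -/
theorem fy_label_smoothing_uniform_regularizer_form
    (n : ℕ) (hn : 1 ≤ n)
    (Ω : (Fin n → ℝ) → ℝ) (hΩ : ContinuousOn Ω (stdSimplex ℝ (Fin n)))
    (Ωstar : (Fin n → ℝ) → ℝ)
    (hΩstar : ∀ z, Ωstar z =
      sSup ((fun p => (∑ i, z i * p i) - Ω p) '' stdSimplex ℝ (Fin n)))
    (L : (Fin n → ℝ) → (Fin n → ℝ) → ℝ)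
    (hL : ∀ z q, L z q = Ωstar z + Ω q - ∑ i, z i * q i)
    (ε : ℝ) (hε : ε ∈ Set.Ico (0 : ℝ) 1) (ystar : Fin n)
    (u : Fin n → ℝ) (hu : u = fun _ => (n : ℝ)⁻¹)
    (e : Fin n → ℝ) (he : e = Pi.single ystar 1)
    (I : (Fin n → ℝ) → (Fin n → ℝ) → ℝ)
    (hI : ∀ q r, I q r = -Ω ((1 - ε) • q + ε • r) + (1 - ε) * Ω q + ε * Ω r)
    (z : Fin n → ℝ) :
    L z ((1 - ε) • e + ε • u) =
      (1 - ε) * (L z e + (ε / (1 - ε)) * L z u) - I e u := by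
  have h1 : (1 : ℝ) - ε ≠ 0 := by
    have := hε.2; linarith
  have hsum : ∑ i, z i * ((1 - ε) • e + ε • u) i
      = (1 - ε) * ∑ i, z i * e i + ε * ∑ i, z i * u i := by
    simp only [Pi.add_apply, Pi.smul_apply, smul_eq_mul, mul_add,
      Finset.sum_add_distrib, Finset.mul_sum]
    refine congrArg₂ (· + ·) ?_ ?_ <;> exact Finset.sum_congr rfl fun i _ => by ring
  rw [hL, hL, hL, hI, hsum]
  field_simp
  ring
end

section
/- Let n ≥ 1, let Δ ⊆ ℝⁿ be the standard simplex, let Ω : ℝⁿ → ℝ be continuous and convex on Δ, let Ω*(z) := sup_{p ∈ Δ} (⟨z, p⟩ − Ω(p)), and let L_Ω(z; q) := Ω*(z) + Ω(q) − ⟨z, q⟩ for q ∈ Δ. If ε ∈ [0, 1] and q, r ∈ Δ satisfy Ω(q) ≥ Ω(r), then for every z ∈ ℝⁿ, L_Ω(z; q) + ε·(⟨z, q⟩ − ⟨z, r⟩) ≥ 0. In particular, when q = e_{y*} is a one-hot vector and r = u is the uniform distribution, L_Ω(z; e_{y*}) + ε·(z_{y*} − z̄) ≥ 0, where z̄ :=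 (1/n)·Σ_y z_y. -/
/-!
Test the supremum defining `Ω*(z)` at `p = (1 - ε) q + ε r ∈ Δ`: convexity and `Ω r ≤ Ω q` give
`Ω p ≤ Ω q`, while `⟨z, p⟩ = ⟨z, q⟩ - ε (⟨z, q⟩ - ⟨z, r⟩)`. Continuity of `Ω` on the compact
simplex makes the supremum finite, so it really dominates this value.
-/

open Finset

theorem ConvexOn.linear_sub_le_at_segment_of_le {E : Type*} [AddCommGroup E] [Module ℝ E]
    {s : Set E} {Ω : E → ℝ} (hΩ : ConvexOn ℝ s Ω) (ℓ : E →ₗ[ℝ] ℝ) {q r : E} (hq : q ∈ s)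
    (hr : r ∈ s) (hqr : Ω r ≤ Ω q) {ε : ℝ} (hε0 : 0 ≤ ε) (hε1 : ε ≤ 1) :
    ℓ q - Ω q - ε * (ℓ q - ℓ r) ≤ ℓ ((1 - ε) • q + ε • r) - Ω ((1 - ε) • q + ε • r) := by
  have hconv : Ω ((1 - ε) • q + ε • r) ≤ (1 - ε) * Ω q + ε * Ω r :=
    hΩ.2 hq hr (by linarith) hε0 (by ring)
  have hlin : ℓ ((1 - ε) • q + ε • r) = (1 - ε) * ℓ q + ε * ℓ r := by simp
  linarith [mul_le_mul_of_nonneg_left hqr hε0]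

theorem fy_loss_plus_linear_regularizer_nonneg_general
    (n : ℕ)
    (Ω : (Fin n → ℝ) → ℝ)
    (hΩcont : ContinuousOn Ω (stdSimplex ℝ (Fin n)))
    (hΩconv : ConvexOn ℝ (stdSimplex ℝ (Fin n)) Ω)
    (Ωstar : (Fin n → ℝ) → ℝ)
    (hΩstar : ∀ z, Ωstar z =
      sSup ((fun p => (∑ i, z i * p i) - Ω p) '' stdSimplex ℝ (Fin n)))
    (L : (Fin n → ℝ) → (Fin n → ℝ) → ℝ)
    (hL : ∀ z q, L z q = Ωstar z + Ω q - ∑ i, z i * q i)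
    (ε : ℝ) (hε : ε ∈ Set.Icc (0 : ℝ) 1)
    (q : Fin n → ℝ) (hq : q ∈ stdSimplex ℝ (Fin n))
    (r : Fin n → ℝ) (hr : r ∈ stdSimplex ℝ (Fin n))
    (hqr : Ω r ≤ Ω q)
    (z : Fin n → ℝ) :
    0 ≤ L z q + ε * ((∑ i, z i * q i) - ∑ i, z i * r i) ∧
    (∀ ystar : Fin n, q = Pi.single ystar 1 → r = (fun _ => (n : ℝ)⁻¹) →
      0 ≤ L z q + ε * (z ystar - (n : ℝ)⁻¹ * ∑ y, z y)) := by
  obtain ⟨hε0, hε1⟩ := hε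
  have hp : (1 - ε) • q + ε • r ∈ stdSimplex ℝ (Fin n) :=
    convex_stdSimplex ℝ (Fin n) hq hr (by linarith) hε0 (by ring)
  have hcont : ContinuousOn (fun p => z ⬝ᵥ p - Ω p) (stdSimplex ℝ (Fin n)) := by
    fun_prop
  have hsup : z ⬝ᵥ ((1 - ε) • q + ε • r) - Ω ((1 - ε) • q + ε • r) ≤ Ωstar z := by
    rw [hΩstar]
    exact le_csSup ((isCompact_stdSimplex ℝ (Fin n)).bddAbove_image hcont) ⟨_, hp, rfl⟩
  have hdecr := hΩconv.linear_sub_le_at_segment_of_le (dotProductBilin ℝ ℝ z) hq hr hqr hε0 hε1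
  simp only [dotProductBilin_apply_apply] at hdecr
  have hmain : 0 ≤ L z q + ε * (z ⬝ᵥ q - z ⬝ᵥ r) := by
    rw [hL]
    change 0 ≤ Ωstar z + Ω q - z ⬝ᵥ q + ε * (z ⬝ᵥ q - z ⬝ᵥ r)
    linarith
  refine ⟨hmain, fun ystar hq_single hr_unif => ?_⟩
  have hone : z ⬝ᵥ q = z ystar := hq_single ▸ dotProduct_single_one z ystar
  have hunif : z ⬝ᵥ r = (n : ℝ)⁻¹ * ∑ y, z y := by
    rw [hr_unif, dotProduct, ← sum_mul, mul_comm]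
  rwa [hone, hunif] at hmain

/-- Nonnegativity of the unregularized Fenchel-Young loss plus the
linear regularizer (Appendix A): if Ω(q) ≥ Ω(r) then
L_Ω(z;q) + ε(⟨z,q⟩ - ⟨z,r⟩) ≥ 0; in particular for q a one-hot vector and r the
uniform distribution, L_Ω(z;e_{y*}) + ε(z_{y*} - z̄) ≥ 0. -/
theorem fy_loss_plus_linear_regularizer_nonneg
    (n : ℕ) (hn : 1 ≤ n)
    (Ω : (Fin n → ℝ) → ℝ)
    (hΩcont : ContinuousOn Ω (stdSimplex ℝ (Fin n)))
    (hΩconv : ConvexOn ℝ (stdSimplex ℝ (Fin n)) Ω)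
    (Ωstar : (Fin n → ℝ) → ℝ)
    (hΩstar : ∀ z, Ωstar z =
      sSup ((fun p => (∑ i, z i * p i) - Ω p) '' stdSimplex ℝ (Fin n)))
    (L : (Fin n → ℝ) → (Fin n → ℝ) → ℝ)
    (hL : ∀ z q, L z q = Ωstar z + Ω q - ∑ i, z i * q i)
    (ε : ℝ) (hε : ε ∈ Set.Icc (0 : ℝ) 1)
    (q : Fin n → ℝ) (hq : q ∈ stdSimplex ℝ (Fin n))
    (r : Fin n → ℝ) (hr : r ∈ stdSimplex ℝ (Fin n))
    (hqr : Ω r ≤ Ω q)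
    (z : Fin n → ℝ) :
    0 ≤ L z q + ε * ((∑ i, z i * q i) - ∑ i, z i * r i) ∧
    (∀ ystar : Fin n, q = Pi.single ystar 1 → r = (fun _ => (n : ℝ)⁻¹) →
      0 ≤ L z q + ε * (z ystar - (n : ℝ)⁻¹ * ∑ y, z y)) :=
  fy_loss_plus_linear_regularizer_nonneg_general n Ω hΩcont hΩconv Ωstar hΩstar L hL ε hε q hq r hr
    hqr z
end

section
/- Let n ≥ 1, let Δ ⊆ ℝⁿ be the standard simplex, let α > 1, and let z ∈ ℝⁿ. Then there exists a threshold τ ∈ ℝ such that the vector p* defined coordinatewise by p*_y := [ (α−1)·(z_y − τ) ]₊^{1/(α−1)} (where [t]₊ := max(t, 0)) lies in Δ and is the unique maximizer over Δ of p ↦ ⟨z, p⟩ − (1/(α(α−1)))·(Σ_y p_y^α − 1). -/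
/-!
Subtracting a threshold `τ` from every score only shifts the objective on the simplex by the
constant `τ`, and after the shift the objective splits into a sum of
one-variable functions `t ↦ (z y - τ) t - t ^ α / (α (α - 1))` on `t ≥ 0`. Each of these is
strictly concave and, by the tangent-line inequality for `t ↦ t ^ α`, has its unique maximum at
`[(α - 1)(z y - τ)]₊ ^ (1 / (α - 1))`. The threshold is chosen by the intermediate value
theorem so that these coordinatewise maximizers sum to one.
-/

open Finset

namespace Entmax

noncomputable def weight (α a : ℝ) : ℝ := max ((α - 1) * a) 0 ^ (1 / (α - 1))

noncomputable def scalarObjective (α a t : ℝ) : ℝ := a * t - (α * (α - 1))⁻¹ * t ^ α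

noncomputable def objective {ι : Type*} [Fintype ι] (α : ℝ) (z p : ι → ℝ) : ℝ :=
  ∑ y, z y * p y - (α * (α - 1))⁻¹ * (∑ y, p y ^ α - 1)

lemma weight_nonneg (α a : ℝ) : 0 ≤ weight α a :=
  Real.rpow_nonneg (le_max_right _ _) _

lemma weight_of_nonpos {α a : ℝ} (hα : 1 < α) (ha : a ≤ 0) : weight α a = 0 := by
  have hβ : 0 < α - 1 := sub_pos.mpr hα
  rw [weight, max_eq_right (mul_nonpos_of_nonneg_of_nonpos hβ.le ha),
    Real.zero_rpow (one_div_pos.mpr hβ).ne']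

lemma weight_inv_sub_one {α : ℝ} (hα : 1 < α) : weight α (1 / (α - 1)) = 1 := by
  have hβ : α - 1 ≠ 0 := (sub_pos.mpr hα).ne'
  rw [weight, mul_one_div_cancel hβ, max_eq_left zero_le_one, Real.one_rpow]

lemma weight_rpow_sub_one {α : ℝ} (hα : α ≠ 1) (a : ℝ) :
    weight α a ^ (α - 1) = max ((α - 1) * a) 0 := by
  rw [weight, one_div, Real.rpow_inv_rpow (le_max_right _ _) (sub_ne_zero.mpr hα)]

lemma continuous_weight {α : ℝ} (hα : 1 < α) : Continuous (weight α) := by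
  have hexp : 0 < 1 / (α - 1) := one_div_pos.mpr (sub_pos.mpr hα)
  exact (Real.continuous_rpow_const hexp.le).comp (by fun_prop)

lemma rpow_tangent_lt {α s t : ℝ} (hα : 1 < α) (hs : 0 ≤ s) (ht : 0 ≤ t) (hts : t ≠ s) :
    s ^ α + α * s ^ (α - 1) * (t - s) < t ^ α := by
  rcases hs.eq_or_lt with rfl | hs
  · rw [Real.zero_rpow (by linarith), Real.zero_rpow (sub_pos.mpr hα).ne']
    simpa using Real.rpow_pos_of_pos (ht.lt_of_ne' hts) α
  have hbern := one_add_mul_self_lt_rpow_one_add (s := t / s - 1)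
    (by linarith [div_nonneg ht hs.le]) (by rwa [sub_ne_zero, ne_eq, div_eq_one_iff_eq hs.ne'])
    hα
  rw [add_sub_cancel, Real.div_rpow ht hs.le] at hbern
  have hsplit : s ^ α = s ^ (α - 1) * s := by
    rw [← Real.rpow_add_one hs.ne', sub_add_cancel]
  calc s ^ α + α * s ^ (α - 1) * (t - s) = s ^ α * (1 + α * (t / s - 1)) := by
        rw [hsplit]; field_simp
    _ < s ^ α * (t ^ α / s ^ α) := mul_lt_mul_of_pos_left hbern (Real.rpow_pos_of_pos hs α)
    _ = t ^ α := mul_div_cancel₀ _ (Real.rpow_pos_of_pos hs α).ne'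

lemma scalarObjective_lt_weight {α a t : ℝ} (hα : 1 < α) (ht : 0 ≤ t)
    (hne : t ≠ weight α a) :
    scalarObjective α a t < scalarObjective α a (weight α a) := by
  set s := weight α a
  have hβ : 0 < α - 1 := sub_pos.mpr hα
  have hc : 0 < (α * (α - 1))⁻¹ := inv_pos.mpr (mul_pos (by linarith) hβ)
  have htangent := rpow_tangent_lt hα (weight_nonneg α a) ht hne
  rw [weight_rpow_sub_one hα.ne' a] at htangent
  -- `max ((α - 1) a) 0 / (α - 1)` is `a` when `s > 0`, and `s = 0 ≥ a` otherwise
  have hslope : a * (t - s) ≤ max ((α - 1) * a) 0 / (α - 1) * (t - s) := by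
    rcases le_total a 0 with ha | ha
    · rw [show s = 0 from weight_of_nonpos hα ha,
        max_eq_right (mul_nonpos_of_nonneg_of_nonpos hβ.le ha), zero_div, zero_mul]
      exact mul_nonpos_of_nonpos_of_nonneg ha (by rwa [sub_zero])
    · rw [max_eq_left (by positivity), mul_div_cancel_left₀ _ hβ.ne']
  have hgap :
      max ((α - 1) * a) 0 / (α - 1) * (t - s) < (α * (α - 1))⁻¹ * (t ^ α - s ^ α) :=
    calc max ((α - 1) * a) 0 / (α - 1) * (t - s)
        = (α * (α - 1))⁻¹ * (α * max ((α - 1) * a) 0 * (t - s)) := by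
          field_simp
      _ < (α * (α - 1))⁻¹ * (t ^ α - s ^ α) := mul_lt_mul_of_pos_left (by linarith) hc
  unfold scalarObjective
  linarith

lemma scalarObjective_le_weight {α a t : ℝ} (hα : 1 < α) (ht : 0 ≤ t) :
    scalarObjective α a t ≤ scalarObjective α a (weight α a) := by
  rcases eq_or_ne t (weight α a) with rfl | hne
  · rfl
  · exact (scalarObjective_lt_weight hα ht hne).le

variable {ι : Type*} [Fintype ι]

lemma exists_sum_weight_eq_one [Nonempty ι] {α : ℝ} (hα : 1 < α) (z : ι → ℝ) :
    ∃ τ : ℝ, ∑ y, weight α (z y - τ) = 1 := by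
  obtain ⟨y₀⟩ := ‹Nonempty ι›
  have hcont : Continuous fun τ => ∑ y, weight α (z y - τ) :=
    continuous_finsetSum _ fun y _ => (continuous_weight hα).comp (by fun_prop)
  set τ₀ := univ.sup' univ_nonempty z
  have hτ₀ : ∑ y, weight α (z y - τ₀) = 0 :=
    sum_eq_zero fun y _ => weight_of_nonpos hα (sub_nonpos.mpr (le_sup' z (mem_univ y)))
  set τ₁ := z y₀ - 1 / (α - 1)
  have hτ₁ : 1 ≤ ∑ y, weight α (z y - τ₁) := by
    calc (1 : ℝ) = weight α (z y₀ - τ₁) := by rw [sub_sub_cancel, weight_inv_sub_one hα]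
      _ ≤ ∑ y, weight α (z y - τ₁) :=
        single_le_sum (f := fun y => weight α (z y - τ₁)) (fun y _ => weight_nonneg α _)
          (mem_univ y₀)
  have hτ₁₀ : τ₁ ≤ τ₀ := by
    have := le_sup' z (mem_univ y₀)
    have : 0 < 1 / (α - 1) := one_div_pos.mpr (sub_pos.mpr hα)
    linarith
  obtain ⟨τ, -, hτ⟩ :=
    intermediate_value_Icc' hτ₁₀ hcont.continuousOn ⟨hτ₀.le.trans zero_le_one, hτ₁⟩
  exact ⟨τ, hτ⟩

lemma objective_eq_sum_scalarObjective (α τ : ℝ) (z p : ι → ℝ) (hp : ∑ y, p y = 1) :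
    objective α z p = ∑ y, scalarObjective α (z y - τ) (p y) + τ + (α * (α - 1))⁻¹ := by
  simp only [objective, scalarObjective, sum_sub_distrib, sub_mul, ← mul_sum, hp]
  ring

variable {α τ : ℝ} {z : ι → ℝ}

lemma objective_le_of_sum_weight_eq_one (hα : 1 < α) (hτ : ∑ y, weight α (z y - τ) = 1)
    {p : ι → ℝ} (hp : p ∈ stdSimplex ℝ ι) :
    objective α z p ≤ objective α z fun y => weight α (z y - τ) := by
  rw [objective_eq_sum_scalarObjective α τ z p hp.2,
    objective_eq_sum_scalarObjective α τ z _ hτ]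
  gcongr with y
  exact scalarObjective_le_weight hα (hp.1 y)

lemma objective_lt_of_sum_weight_eq_one (hα : 1 < α) (hτ : ∑ y, weight α (z y - τ) = 1)
    {p : ι → ℝ} (hp : p ∈ stdSimplex ℝ ι) (hne : p ≠ fun y => weight α (z y - τ)) :
    objective α z p < objective α z fun y => weight α (z y - τ) := by
  rw [objective_eq_sum_scalarObjective α τ z p hp.2,
    objective_eq_sum_scalarObjective α τ z _ hτ]
  obtain ⟨y₀, hy₀⟩ := Function.ne_iff.mp hne
  have := sum_lt_sum (fun y _ => scalarObjective_le_weight (a := z y - τ) hα (hp.1 y))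
    ⟨y₀, mem_univ y₀, scalarObjective_lt_weight hα (hp.1 y₀) hy₀⟩
  linarith

end Entmax

open Entmax in
/-- The α-entmax transformation (Equation 4 of the paper): for α > 1
there is a threshold τ such that p*_y = [(α-1)(z_y - τ)]₊^{1/(α-1)} lies in the
simplex and is the unique maximizer of p ↦ ⟨z,p⟩ - Ω_α(p) over the simplex. -/
theorem entmax_threshold_form
    (n : ℕ) (hn : 1 ≤ n) (α : ℝ) (hα : 1 < α) (z : Fin n → ℝ) :
    ∃ τ : ℝ, ∃ pstar : Fin n → ℝ,
      (∀ y, pstar y = (max ((α - 1) * (z y - τ)) 0) ^ (1 / (α - 1))) ∧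
      pstar ∈ stdSimplex ℝ (Fin n) ∧
      (∀ p ∈ stdSimplex ℝ (Fin n),
        (∑ y, z y * p y) - (α * (α - 1))⁻¹ * ((∑ y, p y ^ α) - 1)
          ≤ (∑ y, z y * pstar y) - (α * (α - 1))⁻¹ * ((∑ y, pstar y ^ α) - 1)) ∧
      (∀ p ∈ stdSimplex ℝ (Fin n), p ≠ pstar →
        (∑ y, z y * p y) - (α * (α - 1))⁻¹ * ((∑ y, p y ^ α) - 1)
          < (∑ y, z y * pstar y) - (α * (α - 1))⁻¹ * ((∑ y, pstar y ^ α) - 1)) := by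
  have : Nonempty (Fin n) := ⟨⟨0, hn⟩⟩
  obtain ⟨τ, hτ⟩ := exists_sum_weight_eq_one hα z
  exact ⟨τ, fun y => weight α (z y - τ), fun y => rfl,
    ⟨fun y => weight_nonneg α _, hτ⟩,
    fun p hp => objective_le_of_sum_weight_eq_one hα hτ hp,
    fun p hp hne => objective_lt_of_sum_weight_eq_one hα hτ hp hne⟩
end
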